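/- Let H = ⟨g₁, …, gₙ⟩ ≤ G be a finitely generated subgroup, and suppose g₁ has maximal length among the generators, i.e. l(g₁) = max_{j=1,…,n} l(g_j). Assume that H is conjugate in G to a subgroup of A or of B and that l(g₁) > 1. Then l(g₁) is odd, say l(g₁) = 2s+1 with s ≥ 1, and for any reduced expression g₁ = k₁⋯k_{2s+1}, the conjugate subgroup (k₁⋯k_s)⁻¹ H (k₁⋯k_s) is contained in A or in B. -/

import Mathlib

variable {G : Type*} [Group G]

/-- A reduced expression with respect to the factors `A` and `B`: every letter lies in
`(A ∪ B) \ (A ∩ B)` and consecutive letters lie in different factors. -/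
def IsReducedWord (A B : Subgroup G) (w : List G) : Prop :=
  (∀ x ∈ w, (x ∈ A ∨ x ∈ B) ∧ ¬(x ∈ A ∧ x ∈ B)) ∧
    w.Chain' fun x y => ¬(x ∈ A ∧ y ∈ A) ∧ ¬(x ∈ B ∧ y ∈ B)

/-- `G` is the internal amalgamated free product of its subgroups `A` and `B` over `A ⊓ B`:
`A` and `B` generate `G` and no reduced word of length at least `2` represents the identity
(this is the classical characterization of the canonical map from the abstract amalgamated
free product onto `G` being an isomorphism). -/
def IsAmalgamatedProduct (A B : Subgroup G) : Prop :=
  A ⊔ B = ⊤ ∧ ∀ w : List G, IsReducedWord A B w → 2 ≤ w.length → w.prod ≠ 1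

/-- The length `l(g)` of an element: the (common) number of letters of a reduced expression
of `g`; it is `0` for elements of `A ⊓ B` (which admit no reduced expression). -/
noncomputable def amalgLen (A B : Subgroup G) (g : G) : ℕ :=
  sInf {r | ∃ w : List G, IsReducedWord A B w ∧ w.prod = g ∧ w.length = r}

/-- A subgroup `H` is bounded if the lengths of its elements are bounded. -/
def BoundedSubgroup (A B : Subgroup G) (H : Subgroup G) : Prop :=
  ∃ N : ℕ, ∀ h ∈ H, amalgLen A B h ≤ N

/-- An element is bounded if the cyclic subgroup it generates is bounded. -/
def BoundedElement (A B : Subgroup G) (g : G) : Prop :=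
  BoundedSubgroup A B (Subgroup.zpowers g)


/-!
Choose a conjugator `y = k₁ ⋯ k_t` (a reduced word) of minimal length such that `y⁻¹ H y`
lies in a factor, say `A`. Minimality forces the last letter `k_t` into `B \ A`, and forces some
generator to satisfy `y⁻¹ gⱼ y ∈ A \ B`; then `k₁ ⋯ k_t (y⁻¹ gⱼ y) k_t⁻¹ ⋯ k₁⁻¹` is a reduced
expression of `gⱼ`, of length `2t + 1`. As every conjugate `y c y⁻¹` with `c` in a factor has
length at most `2t + 1`, maximality of `l(g₁)` gives `l(g₁) = 2t + 1` and `y⁻¹ g₁ y ∉ B`, so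
`g₁` also has such a palindromic reduced expression. Finally, two reduced expressions of the same
element agree letter by letter up to right multiplication by elements of `A ∩ B`, so the first `t`
letters of any reduced expression of `g₁` multiply to `y k` with `k ∈ A ∩ B`.
-/

def IsLetter (A B : Subgroup G) (x : G) : Prop :=
  (x ∈ A ∨ x ∈ B) ∧ ¬(x ∈ A ∧ x ∈ B)

def Alternating (A B : Subgroup G) (x y : G) : Prop :=
  ¬(x ∈ A ∧ y ∈ A) ∧ ¬(x ∈ B ∧ y ∈ B)

section Words

variable {A B : Subgroup G} {x y : G} {l u v w : List G}

theorem IsLetter.symm (h : IsLetter A B x) : IsLetter B A x :=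
  ⟨h.1.symm, fun h' => h.2 h'.symm⟩

theorem Alternating.symm (h : Alternating A B x y) : Alternating A B y x :=
  ⟨fun h' => h.1 h'.symm, fun h' => h.2 h'.symm⟩

theorem Alternating.swap (h : Alternating A B x y) : Alternating B A x y :=
  ⟨h.2, h.1⟩

theorem not_alternating_iff :
    ¬Alternating A B x y ↔ (x ∈ A ∧ y ∈ A) ∨ (x ∈ B ∧ y ∈ B) := by
  simp only [Alternating]
  tauto

theorem IsLetter.mem_iff_of_not_alternating (hx : IsLetter A B x) (hy : IsLetter A B y)
    (h : ¬Alternating A B x y) : (x ∈ A ↔ y ∈ A) ∧ (x ∈ B ↔ y ∈ B) := by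
  rw [not_alternating_iff] at h
  unfold IsLetter at hx hy
  tauto

@[simp]
theorem isLetter_inv : IsLetter A B x⁻¹ ↔ IsLetter A B x := by
  simp [IsLetter]

@[simp]
theorem alternating_inv_left : Alternating A B x⁻¹ y ↔ Alternating A B x y := by
  simp [Alternating]

@[simp]
theorem alternating_inv_right : Alternating A B x y⁻¹ ↔ Alternating A B x y := by
  simp [Alternating]

theorem isReducedWord_iff :
    IsReducedWord A B w ↔ (∀ x ∈ w, IsLetter A B x) ∧ w.IsChain (Alternating A B) :=
  Iff.rfl

theorem IsReducedWord.symm (h : IsReducedWord A B w) : IsReducedWord B A w :=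
  ⟨fun x hx => IsLetter.symm (h.1 x hx), h.2.imp fun _ _ hxy => Alternating.swap hxy⟩

theorem isReducedWord_comm : IsReducedWord B A w ↔ IsReducedWord A B w :=
  ⟨IsReducedWord.symm, IsReducedWord.symm⟩

@[simp]
theorem isReducedWord_nil : IsReducedWord A B [] :=
  ⟨by simp, List.isChain_nil⟩

theorem isReducedWord_cons : IsReducedWord A B (x :: w) ↔
    IsLetter A B x ∧ (∀ y ∈ w.head?, Alternating A B x y) ∧ IsReducedWord A B w := by
  simp only [isReducedWord_iff, List.forall_mem_cons, List.isChain_cons]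
  tauto

@[simp]
theorem isReducedWord_singleton : IsReducedWord A B [x] ↔ IsLetter A B x := by
  simp [isReducedWord_cons]

theorem isReducedWord_append : IsReducedWord A B (u ++ v) ↔ IsReducedWord A B u ∧
    IsReducedWord A B v ∧ ∀ x ∈ u.getLast?, ∀ y ∈ v.head?, Alternating A B x y := by
  simp only [isReducedWord_iff, List.forall_mem_append, List.isChain_append]
  tauto

theorem IsReducedWord.inv_reverse (h : IsReducedWord A B w) :
    IsReducedWord A B (w.map (·⁻¹)).reverse := by
  rw [isReducedWord_iff] at h ⊢
  refine ⟨?_, ?_⟩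
  · simp only [List.mem_reverse, List.mem_map]
    rintro _ ⟨y, hy, rfl⟩
    exact isLetter_inv.2 (h.1 y hy)
  · rw [List.isChain_reverse, List.isChain_map]
    exact h.2.imp fun _ _ hxy => by simpa using hxy.symm

theorem IsReducedWord.replace_head (h : IsReducedWord A B (x :: w)) (hA : y ∈ A ↔ x ∈ A)
    (hB : y ∈ B ↔ x ∈ B) : IsReducedWord A B (y :: w) := by
  rw [isReducedWord_cons] at h ⊢
  simpa only [IsLetter, Alternating, hA, hB] using h

theorem IsReducedWord.inf_mul_head (h : IsReducedWord A B (x :: w)) {k : G} (hk : k ∈ A ⊓ B) :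
    IsReducedWord A B ((k * x) :: w) :=
  h.replace_head (mul_mem_cancel_left hk.1) (mul_mem_cancel_left hk.2)

theorem IsReducedWord.append_cons_inv_reverse (hu : IsReducedWord A B u) (hx : IsLetter A B x)
    (halt : ∀ y ∈ u.getLast?, Alternating A B y x) :
    IsReducedWord A B (u ++ x :: (u.map (·⁻¹)).reverse) := by
  refine isReducedWord_append.2 ⟨hu, isReducedWord_cons.2 ⟨hx, ?_, hu.inv_reverse⟩, ?_⟩
  · simpa [List.head?_reverse, List.getLast?_map] using fun y hy => (halt y hy).symm
  · simpa using halt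

theorem exists_inf_mul_reduced_cons (hx : x ∈ A ∨ x ∈ B) (hw : IsReducedWord A B w) :
    ∃ k ∈ A ⊓ B, ∃ w', IsReducedWord A B w' ∧ w'.length ≤ w.length + 1 ∧
      x * w.prod = k * w'.prod := by
  rcases w with _ | ⟨y, t⟩
  · by_cases hk : x ∈ A ⊓ B
    · exact ⟨x, hk, [], by simp, by simp, by simp⟩
    · exact ⟨1, one_mem _, [x], isReducedWord_singleton.2 ⟨hx, hk⟩, by simp, by simp⟩
  obtain ⟨hy, -, ht⟩ := isReducedWord_cons.1 hw
  by_cases hshare : (x ∈ A ∧ y ∈ A) ∨ (x ∈ B ∧ y ∈ B)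
  · by_cases hk : x * y ∈ A ⊓ B
    · exact ⟨x * y, hk, t, ht, by simp; omega, by simp [mul_assoc]⟩
    refine ⟨1, one_mem _, (x * y) :: t, ?_, by simp, by simp [mul_assoc]⟩
    have hxA : x ∈ A → (x * y ∈ A ↔ y ∈ A) := fun h => mul_mem_cancel_left h
    have hxB : x ∈ B → (x * y ∈ B ↔ y ∈ B) := fun h => mul_mem_cancel_left h
    simp only [IsLetter, Subgroup.mem_inf] at hy hk
    exact hw.replace_head (by tauto) (by tauto)
  · refine ⟨1, one_mem _, x :: y :: t, isReducedWord_cons.2 ⟨?_, ?_, hw⟩, by simp, by simp⟩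
    · simp only [IsLetter] at hy ⊢
      tauto
    · simpa [Alternating] using hshare

theorem exists_inf_mul_reduced (hl : ∀ x ∈ l, x ∈ A ∨ x ∈ B) :
    ∃ k ∈ A ⊓ B, ∃ w, IsReducedWord A B w ∧ w.length ≤ l.length ∧ l.prod = k * w.prod := by
  induction l with
  | nil => exact ⟨1, one_mem _, [], isReducedWord_nil, le_rfl, by simp⟩
  | cons x l ih =>
    obtain ⟨k, hk, w, hw, hlen, hprod⟩ := ih fun y hy => hl y (List.mem_cons_of_mem x hy)
    have hxk : x * k ∈ A ∨ x * k ∈ B :=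
      (hl x List.mem_cons_self).imp (mul_mem · hk.1) (mul_mem · hk.2)
    obtain ⟨k', hk', w', hw', hlen', hprod'⟩ := exists_inf_mul_reduced_cons hxk hw
    refine ⟨k', hk', w', hw', by simp; omega, ?_⟩
    rw [List.prod_cons, hprod, ← mul_assoc, hprod']

theorem exists_prod_eq_of_sup_eq_top (hAB : A ⊔ B = ⊤) (x : G) :
    ∃ l : List G, (∀ y ∈ l, y ∈ A ∨ y ∈ B) ∧ l.prod = x := by
  have hx : x ∈ Subgroup.closure ((A : Set G) ∪ B) := by
    rw [← Subgroup.sup_eq_closure, hAB]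
    trivial
  induction hx using Subgroup.closure_induction_left with
  | one => exact ⟨[], by simp, rfl⟩
  | mul_left y hy z _ ih =>
    obtain ⟨l, hl, rfl⟩ := ih
    exact ⟨y :: l, List.forall_mem_cons.2 ⟨hy, hl⟩, rfl⟩
  | inv_mul_cancel y hy z _ ih =>
    obtain ⟨l, hl, rfl⟩ := ih
    exact ⟨y⁻¹ :: l, List.forall_mem_cons.2 ⟨hy.imp inv_mem inv_mem, hl⟩, rfl⟩

theorem exists_reduced_mul_inf (hAB : A ⊔ B = ⊤) (x : G) :
    ∃ w, IsReducedWord A B w ∧ ∃ k ∈ A ⊓ B, x = w.prod * k := by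
  obtain ⟨l, hl, hlx⟩ := exists_prod_eq_of_sup_eq_top hAB x⁻¹
  obtain ⟨k, hk, w, hw, -, hprod⟩ := exists_inf_mul_reduced hl
  refine ⟨_, hw.inv_reverse, k⁻¹, inv_mem hk, ?_⟩
  rw [← List.prod_inv_reverse, ← mul_inv_rev, ← hprod, hlx, inv_inv]

theorem exists_shortest_reduced_word (hAB : A ⊔ B = ⊤) {P : G → Prop}
    (hP : ∀ z, ∀ k ∈ A ⊓ B, P (z * k) → P z) {x : G} (hx : P x) :
    ∃ u, IsReducedWord A B u ∧ P u.prod ∧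
      ∀ v, IsReducedWord A B v → P v.prod → u.length ≤ v.length := by
  classical
  obtain ⟨w, hw, k, hk, rfl⟩ := exists_reduced_mul_inf hAB x
  have hex : ∃ n, ∃ u, IsReducedWord A B u ∧ P u.prod ∧ u.length = n :=
    ⟨_, w, hw, hP _ k hk hx, rfl⟩
  obtain ⟨u, hu, hPu, hlen⟩ := Nat.find_spec hex
  exact ⟨u, hu, hPu, fun v hv hPv => hlen ▸ Nat.find_min' hex ⟨v, hv, hPv, rfl⟩⟩

end Words

namespace IsAmalgamatedProduct

variable {A B : Subgroup G} {u v w : List G}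

theorem symm (hG : IsAmalgamatedProduct A B) : IsAmalgamatedProduct B A :=
  ⟨sup_comm A B ▸ hG.1, fun w hw => hG.2 w hw.symm⟩

theorem eq_nil_of_prod_mem_inf (hG : IsAmalgamatedProduct A B) (hw : IsReducedWord A B w)
    (h : w.prod ∈ A ⊓ B) : w = [] := by
  match w, hw with
  | [], _ => rfl
  | [x], hw => exact absurd (by simpa using h) (isReducedWord_singleton.1 hw).2
  | x :: y :: t, hw =>
    exact absurd (by simp [mul_assoc]) (hG.2 _ (hw.inf_mul_head (inv_mem h)) (by simp))

theorem prod_ne_prod_of_alternating_heads (hG : IsAmalgamatedProduct A B)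
    (hu : IsReducedWord A B u)
    (hv : IsReducedWord A B v) (halt : ∀ x ∈ u.head?, ∀ y ∈ v.head?, Alternating A B x y)
    (hlen : 2 ≤ u.length + v.length) : u.prod ≠ v.prod := by
  intro h
  have hred : IsReducedWord A B ((u.map (·⁻¹)).reverse ++ v) :=
    isReducedWord_append.2 ⟨hu.inv_reverse, hv, by simpa [List.getLast?_reverse] using halt⟩
  exact hG.2 _ hred (by simpa using hlen) (by simp [← List.prod_inv_reverse, h])

theorem inv_mul_mem_inf_of_prod_cons_eq {a b : G} (hG : IsAmalgamatedProduct A B)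
    (hw : IsReducedWord A B (a :: w)) (hv : IsReducedWord A B (b :: v))
    (h : (a :: w).prod = (b :: v).prod) : a⁻¹ * b ∈ A ⊓ B := by
  by_contra hc
  by_cases hab : Alternating A B a b
  · exact hG.prod_ne_prod_of_alternating_heads hw hv (by simpa using hab)
      (by simp only [List.length_cons]; omega) h
  obtain ⟨ha, haw, hw'⟩ := isReducedWord_cons.1 hw
  obtain ⟨hb, -, -⟩ := isReducedWord_cons.1 hv
  have hac : ¬Alternating A B a (a⁻¹ * b) := by
    rw [not_alternating_iff] at hab ⊢
    exact hab.imp (fun h => ⟨h.1, mul_mem (inv_mem h.1) h.2⟩)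
      (fun h => ⟨h.1, mul_mem (inv_mem h.1) h.2⟩)
  have hc' : IsLetter A B (a⁻¹ * b) := ⟨(not_alternating_iff.1 hac).imp And.right And.right, hc⟩
  obtain ⟨hA, hB⟩ := ha.mem_iff_of_not_alternating hc' hac
  obtain ⟨habA, habB⟩ := ha.mem_iff_of_not_alternating hb hab
  -- `w` and `(a⁻¹ * b) :: v` have the same product, and their heads alternate because
  -- `a⁻¹ * b` is a letter of the same type as `a`
  refine hG.prod_ne_prod_of_alternating_heads hw'
    (hv.replace_head (hA.symm.trans habA) (hB.symm.trans habB)) ?_ ?_ ?_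
  · intro x hx y hy
    obtain rfl : y = a⁻¹ * b := by simpa using hy.symm
    simpa only [Alternating, hA, hB] using (haw x hx).symm
  · rcases w with _ | _
    · rcases v with _ | _
      · simp only [List.prod_cons, List.prod_nil, mul_one] at h
        simp [h] at hc
      · simp
    · simp; omega
  · simp only [List.prod_cons] at h ⊢
    rw [mul_assoc, ← h, inv_mul_cancel_left]

theorem length_eq_and_take_mem_inf (hG : IsAmalgamatedProduct A B) {z : G}
    (hw : IsReducedWord A B w) (hv : IsReducedWord A B v) (hz : z ∈ A ⊓ B)
    (h : w.prod = z * v.prod) :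
    w.length = v.length ∧ ∀ i, (w.take i).prod⁻¹ * z * (v.take i).prod ∈ A ⊓ B := by
  induction w generalizing v z with
  | nil =>
    obtain rfl : v = [] := hG.eq_nil_of_prod_mem_inf hv <| by
      rw [eq_inv_of_mul_eq_one_right h.symm]
      exact inv_mem hz
    simpa using hz
  | cons a w ih =>
    cases v with
    | nil =>
      exact absurd (hG.eq_nil_of_prod_mem_inf hw (by simpa [h] using hz)) (List.cons_ne_nil _ _)
    | cons b v =>
      simp only [List.prod_cons] at h
      have hc := hG.inv_mul_mem_inf_of_prod_cons_eq hw (hv.inf_mul_head hz)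
        (by simpa [mul_assoc] using h)
      obtain ⟨hlen, htake⟩ := ih (isReducedWord_cons.1 hw).2.2 (isReducedWord_cons.1 hv).2.2 hc
        (by rw [mul_assoc, mul_assoc, ← h, inv_mul_cancel_left])
      refine ⟨by simp [hlen], fun i => ?_⟩
      cases i with
      | zero => simpa using hz
      | succ i => simpa [mul_assoc] using htake i

theorem length_eq_of_prod_eq (hG : IsAmalgamatedProduct A B) (hw : IsReducedWord A B w)
    (hv : IsReducedWord A B v) (h : w.prod = v.prod) : w.length = v.length :=
  (hG.length_eq_and_take_mem_inf hw hv (one_mem _) (by rw [h, one_mul])).1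

theorem take_prod_inv_mul_mem_inf (hG : IsAmalgamatedProduct A B) (hw : IsReducedWord A B w)
    (hv : IsReducedWord A B v) (h : w.prod = v.prod) (i : ℕ) :
    (w.take i).prod⁻¹ * (v.take i).prod ∈ A ⊓ B := by
  simpa using (hG.length_eq_and_take_mem_inf hw hv (one_mem _) (by rw [h, one_mul])).2 i

end IsAmalgamatedProduct

section Length

variable {A B : Subgroup G} {l u w : List G}

theorem amalgLen_comm (A B : Subgroup G) : amalgLen B A = amalgLen A B := by
  funext g
  simp only [amalgLen, isReducedWord_comm]

theorem amalgLen_prod_le_length (hw : IsReducedWord A B w) : amalgLen A B w.prod ≤ w.length :=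
  Nat.sInf_le ⟨w, hw, rfl, rfl⟩

theorem IsAmalgamatedProduct.amalgLen_prod (hG : IsAmalgamatedProduct A B)
    (hw : IsReducedWord A B w) : amalgLen A B w.prod = w.length := by
  refine le_antisymm (amalgLen_prod_le_length hw) (le_csInf ⟨_, w, hw, rfl, rfl⟩ ?_)
  rintro _ ⟨v, hv, hvw, rfl⟩
  exact (hG.length_eq_of_prod_eq hw hv hvw.symm).le

theorem IsAmalgamatedProduct.amalgLen_eq_zero_of_mem_inf (hG : IsAmalgamatedProduct A B) {k : G}
    (hk : k ∈ A ⊓ B) : amalgLen A B k = 0 := by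
  refine Nat.sInf_eq_zero.2 (or_iff_not_imp_right.2 fun hne => ?_)
  obtain ⟨n, w, hw, rfl, rfl⟩ := Set.nonempty_iff_ne_empty.2 hne
  obtain rfl := hG.eq_nil_of_prod_mem_inf hw hk
  exact ⟨[], hw, rfl, rfl⟩

theorem IsAmalgamatedProduct.amalgLen_inf_mul_prod_le (hG : IsAmalgamatedProduct A B) {k : G}
    (hk : k ∈ A ⊓ B) (hw : IsReducedWord A B w) : amalgLen A B (k * w.prod) ≤ w.length := by
  rcases w with _ | ⟨x, t⟩
  · simp [hG.amalgLen_eq_zero_of_mem_inf hk]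
  · simpa [mul_assoc] using amalgLen_prod_le_length (hw.inf_mul_head hk)

theorem IsAmalgamatedProduct.amalgLen_prod_le (hG : IsAmalgamatedProduct A B)
    (hl : ∀ x ∈ l, x ∈ A ∨ x ∈ B) : amalgLen A B l.prod ≤ l.length := by
  obtain ⟨k, hk, w, hw, hlen, hprod⟩ := exists_inf_mul_reduced hl
  rw [hprod]
  exact (hG.amalgLen_inf_mul_prod_le hk hw).trans hlen

theorem IsAmalgamatedProduct.amalgLen_conj_le (hG : IsAmalgamatedProduct A B)
    (hu : IsReducedWord A B u) {e : G} (he : e ∈ A ∨ e ∈ B) :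
    amalgLen A B (u.prod * e * u.prod⁻¹) ≤ 2 * u.length + 1 := by
  have hletters : ∀ x ∈ u ++ e :: (u.map (·⁻¹)).reverse, x ∈ A ∨ x ∈ B := by
    simp only [List.mem_append, List.mem_cons, List.mem_reverse, List.mem_map]
    rintro x (hx | rfl | ⟨y, hy, rfl⟩)
    · exact (hu.1 x hx).1
    · exact he
    · exact (hu.1 y hy).1.imp inv_mem inv_mem
  simpa [List.prod_inv_reverse, mul_assoc, two_mul, add_assoc] using hG.amalgLen_prod_le hletters

end Length

section Conjugator

def ConjugatesInto {ι : Type*} (K : Subgroup G) (g : ι → G) (z : G) : Prop :=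
  ∀ j, z⁻¹ * g j * z ∈ K

variable {A B K : Subgroup G} {ι : Type*} {g : ι → G} {i₀ : ι} {u : List G}

theorem conj_mul_mem_iff {k : G} (hk : k ∈ K) (z y : G) :
    (z * k)⁻¹ * y * (z * k) ∈ K ↔ z⁻¹ * y * z ∈ K := by
  rw [show (z * k)⁻¹ * y * (z * k) = k⁻¹ * (z⁻¹ * y * z) * k by group,
    mul_mem_cancel_right hk, mul_mem_cancel_left (inv_mem hk)]

theorem conjugatesInto_mul_iff {k : G} (hk : k ∈ K) (z : G) :
    ConjugatesInto K g (z * k) ↔ ConjugatesInto K g z :=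
  forall_congr' fun j => conj_mul_mem_iff hk z (g j)

theorem forall_conj_mem_closure_range_iff {x : G} :
    (∀ h ∈ Subgroup.closure (Set.range g), x⁻¹ * h * x ∈ K) ↔ ConjugatesInto K g x := by
  refine ⟨fun h j => h _ (Subgroup.subset_closure ⟨j, rfl⟩), fun h => ?_⟩
  have : Subgroup.closure (Set.range g) ≤ K.comap (MulAut.conj x⁻¹).toMonoidHom :=
    (Subgroup.closure_le _).2 (by rintro _ ⟨j, rfl⟩; simpa using h j)
  exact fun y hy => by simpa using this hy

theorem IsAmalgamatedProduct.exists_take_eq_mul_inf (hG : IsAmalgamatedProduct A B)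
    (hu : IsReducedWord A B u) {e : G} (he : IsLetter A B e)
    (halt : ∀ y ∈ u.getLast?, Alternating A B y e) {w : List G} (hw : IsReducedWord A B w)
    (hwe : w.prod = u.prod * e * u.prod⁻¹) : ∃ k ∈ A ⊓ B, (w.take u.length).prod = u.prod * k := by
  have hW := hu.append_cons_inv_reverse he halt
  have hd := hG.take_prod_inv_mul_mem_inf hw hW
    (by simp [hwe, List.prod_inv_reverse, mul_assoc]) u.length
  rw [List.take_left' rfl] at hd
  exact ⟨_, inv_mem hd, by group⟩

theorem IsAmalgamatedProduct.amalgLen_conj (hG : IsAmalgamatedProduct A B)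
    (hu : IsReducedWord A B u) {e : G} (he : IsLetter A B e)
    (halt : ∀ y ∈ u.getLast?, Alternating A B y e) :
    amalgLen A B (u.prod * e * u.prod⁻¹) = 2 * u.length + 1 := by
  simpa [List.prod_inv_reverse, mul_assoc, two_mul, add_assoc] using
    hG.amalgLen_prod (hu.append_cons_inv_reverse he halt)

theorem getLast_notMem_and_exists_notMem_of_shortest {L : G}
    (hu : IsReducedWord A B (u ++ [L])) (hconj : ConjugatesInto A g (u ++ [L]).prod)
    (hmin : ∀ v, IsReducedWord A B v → ConjugatesInto A g v.prod ∨ ConjugatesInto B g v.prod →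
      (u ++ [L]).length ≤ v.length) :
    L ∉ A ∧ ∃ j, (u ++ [L]).prod⁻¹ * g j * (u ++ [L]).prod ∉ B := by
  obtain ⟨hu', hL, -⟩ := isReducedWord_append.1 hu
  have hshorter : ¬(ConjugatesInto A g u.prod ∨ ConjugatesInto B g u.prod) := fun h => by
    simpa using hmin u hu' h
  have hprod : (u ++ [L]).prod = u.prod * L := by simp
  rw [hprod] at hconj ⊢
  have hLA : L ∉ A := fun hLA => hshorter (Or.inl ((conjugatesInto_mul_iff hLA _).1 hconj))
  refine ⟨hLA, ?_⟩
  by_contra! h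
  have hLB : L ∈ B := (isReducedWord_singleton.1 hL).1.resolve_left hLA
  exact hshorter (Or.inr ((conjugatesInto_mul_iff hLB _).1 h))

theorem IsAmalgamatedProduct.conj_take_mem_of_shortest (hG : IsAmalgamatedProduct A B)
    (hmax : ∀ j, amalgLen A B (g j) ≤ amalgLen A B (g i₀)) (hlen : 1 < amalgLen A B (g i₀))
    (hu : IsReducedWord A B u) (hconj : ConjugatesInto A g u.prod)
    (hmin : ∀ v, IsReducedWord A B v → ConjugatesInto A g v.prod ∨ ConjugatesInto B g v.prod →
      u.length ≤ v.length) :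
    amalgLen A B (g i₀) = 2 * u.length + 1 ∧
      ∀ w, IsReducedWord A B w → w.prod = g i₀ → ConjugatesInto A g (w.take u.length).prod := by
  have hgc : ∀ j, g j = u.prod * (u.prod⁻¹ * g j * u.prod) * u.prod⁻¹ := fun j => by group
  obtain ⟨u', L, rfl⟩ : ∃ u' L, u = u' ++ [L] := by
    refine (List.eq_nil_or_concat' u).resolve_left fun hnil => ?_
    subst hnil
    have := hG.amalgLen_prod_le (l := [g i₀]) (by simpa using Or.inl (hconj i₀))
    simp only [List.prod_cons, List.prod_nil, mul_one, List.length_singleton] at this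
    omega
  obtain ⟨hLA, j₀, hj₀⟩ := getLast_notMem_and_exists_notMem_of_shortest hu hconj hmin
  obtain ⟨hu', hL, -⟩ := isReducedWord_append.1 hu
  have hLB : L ∈ B := (isReducedWord_singleton.1 hL).1.resolve_left hLA
  have halt : ∀ e, e ∉ B → ∀ y ∈ (u' ++ [L]).getLast?, Alternating A B y e := by
    intro e he y hy
    obtain rfl : y = L := by simpa using hy.symm
    exact ⟨fun h => hLA h.1, fun h => he h.2⟩
  have hlen₀ := hG.amalgLen_conj hu ⟨Or.inl (hconj j₀), fun h => hj₀ h.2⟩ (halt _ hj₀)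
  rw [← hgc j₀] at hlen₀
  set c := (u' ++ [L]).prod⁻¹ * g i₀ * (u' ++ [L]).prod
  -- if `c ∈ B` then `g i₀` is conjugate by `u'` to an element of `B`, which makes it too short
  have hc : c ∉ B := fun hB => by
    have hbound := hG.amalgLen_conj_le hu' (e := L * c * L⁻¹)
      (Or.inr (mul_mem (mul_mem hLB hB) (inv_mem hLB)))
    rw [show u'.prod * (L * c * L⁻¹) * u'.prod⁻¹ = g i₀ by simp [c]; group] at hbound
    have := hmax j₀
    simp only [List.length_append, List.length_singleton] at hlen₀ this
    omega
  have hc' : IsLetter A B c := ⟨Or.inl (hconj i₀), fun h => hc h.2⟩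
  refine ⟨by rw [hgc i₀, hG.amalgLen_conj hu hc' (halt _ hc)], fun w hw hwg => ?_⟩
  obtain ⟨k, hk, hwk⟩ := hG.exists_take_eq_mul_inf hu hc' (halt _ hc) hw (hwg.trans (hgc i₀))
  rwa [hwk, conjugatesInto_mul_iff hk.1]

theorem IsAmalgamatedProduct.conj_take_mem_or_of_shortest (hG : IsAmalgamatedProduct A B)
    (hmax : ∀ j, amalgLen A B (g j) ≤ amalgLen A B (g i₀)) (hlen : 1 < amalgLen A B (g i₀))
    (hu : IsReducedWord A B u) (hconj : ConjugatesInto A g u.prod ∨ ConjugatesInto B g u.prod)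
    (hmin : ∀ v, IsReducedWord A B v → ConjugatesInto A g v.prod ∨ ConjugatesInto B g v.prod →
      u.length ≤ v.length) :
    amalgLen A B (g i₀) = 2 * u.length + 1 ∧ ∀ w, IsReducedWord A B w → w.prod = g i₀ →
      ConjugatesInto A g (w.take u.length).prod ∨ ConjugatesInto B g (w.take u.length).prod := by
  rcases hconj with hA | hB
  · obtain ⟨hlen', htake⟩ := hG.conj_take_mem_of_shortest hmax hlen hu hA hmin
    exact ⟨hlen', fun w hw hwg => Or.inl (htake w hw hwg)⟩
  · rw [← amalgLen_comm] at hmax hlen ⊢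
    obtain ⟨hlen', htake⟩ := hG.symm.conj_take_mem_of_shortest hmax hlen hu.symm hB
      fun v hv hPv => hmin v hv.symm hPv.symm
    exact ⟨hlen', fun w hw hwg => Or.inr (htake w hw.symm hwg)⟩

end Conjugator

theorem stmt1 (A B : Subgroup G) (hG : IsAmalgamatedProduct A B)
    (n : ℕ) (g : Fin (n + 1) → G) (H : Subgroup G)
    (hH : H = Subgroup.closure (Set.range g))
    (hmax : ∀ j, amalgLen A B (g j) ≤ amalgLen A B (g 0))
    (hconj : ∃ x : G, (∀ h ∈ H, x⁻¹ * h * x ∈ A) ∨ (∀ h ∈ H, x⁻¹ * h * x ∈ B))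
    (hlen : 1 < amalgLen A B (g 0)) :
    ∃ s : ℕ, 1 ≤ s ∧ amalgLen A B (g 0) = 2 * s + 1 ∧
      ∀ w : List G, IsReducedWord A B w → w.prod = g 0 →
        ((∀ h ∈ H, ((w.take s).prod)⁻¹ * h * (w.take s).prod ∈ A) ∨
          (∀ h ∈ H, ((w.take s).prod)⁻¹ * h * (w.take s).prod ∈ B)) := by
  subst hH
  simp only [forall_conj_mem_closure_range_iff] at hconj ⊢
  obtain ⟨x, hx⟩ := hconj
  obtain ⟨u, hu, hconj, hmin⟩ := exists_shortest_reduced_word hG.1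
    (P := fun z => ConjugatesInto A g z ∨ ConjugatesInto B g z)
    (fun z k hk => Or.imp (conjugatesInto_mul_iff hk.1 z).1 (conjugatesInto_mul_iff hk.2 z).1) hx
  obtain ⟨hlen', htake⟩ := hG.conj_take_mem_or_of_shortest hmax hlen hu hconj hmin
  exact ⟨u.length, by omega, hlen', htake⟩
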